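/- arXiv:2401.04781 — 3 statements merged into one kernel-verified Lean document; each statement's English description precedes it below -/
import Mathlib

section
/- For all node signs ξ_r, η_r, ξ_s, η_s ∈ {−1, 1}, all a, b, h > 0, all E ∈ ℝ, and all μ ∈ ℝ with (1+μ)(1−2μ) ≠ 0, setting γ = b/a, the 2×2 real matrix (a·b·h/4) ∫_{−1}^{1} ∫_{−1}^{1} β_r(ξ,η)ᵀ χ_E β_s(ξ,η) dξ dη equals (E·h/(4(1+μ)(1−2μ))) · [[(1−μ)·γ·ξ_r ξ_s·(1 + η_r η_s/3), μ·ξ_r η_s], [μ·η_r ξ_s, (1−μ)·(η_r η_s/γ)·(1 + ξ_r ξ_s/3)]]. -/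
/-!
Since the shear row of `chiE` vanishes, every entry of `βᵣᵀ χ_E βₛ` is a constant times a product
of affine functions `1 + p t` of `ξ` and of `η`. The double integral therefore splits, and the
entries follow from `∫₋₁¹ (1 + p t) dt = 2` and `∫₋₁¹ (1 + p t)(1 + q t) dt = 2 (1 + p q / 3)`.
-/

open MeasureTheory Matrix

/-- Strain–displacement matrix of the compatible bilinear rectangular element. -/
noncomputable def betaC (a b ξr ηr ξ η : ℝ) : Matrix (Fin 3) (Fin 2) ℝ :=
  (1 / 2 : ℝ) • !![ξr * (1 + ηr * η) / a, 0;
                   0, ηr * (1 + ξr * ξ) / b;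
                   ηr * (1 + ξr * ξ) / b, ξr * (1 + ηr * η) / a]

/-- Normal-deformation part of the plane-strain elasticity matrix. -/
noncomputable def chiE (E μ : ℝ) : Matrix (Fin 3) (Fin 3) ℝ :=
  (E / ((1 + μ) * (1 - 2 * μ))) • !![1 - μ, μ, 0; μ, 1 - μ, 0; 0, 0, 0]

theorem intervalIntegral_neg_one_one_const (c : ℝ) : ∫ _ in (-1 : ℝ)..1, c = 2 * c := by
  norm_num

theorem intervalIntegral_neg_one_one_one_add_mul (p : ℝ) :
    ∫ t in (-1 : ℝ)..1, (1 + p * t) = 2 := by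
  rw [intervalIntegral.integral_add intervalIntegrable_const
    (Continuous.intervalIntegrable (by fun_prop) _ _), intervalIntegral.integral_const_mul,
    integral_id]
  norm_num

theorem intervalIntegral_neg_one_one_one_add_mul_mul_one_add_mul (p q : ℝ) :
    ∫ t in (-1 : ℝ)..1, (1 + p * t) * (1 + q * t) = 2 * (1 + p * q / 3) := by
  have hexpand : ∀ t : ℝ, (1 + p * t) * (1 + q * t) = (1 + (p + q) * t) + p * q * t ^ 2 :=
    fun t => by ring
  simp only [hexpand]
  rw [intervalIntegral.integral_add (Continuous.intervalIntegrable (by fun_prop) _ _)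
    (Continuous.intervalIntegrable (by fun_prop) _ _), intervalIntegral_neg_one_one_one_add_mul,
    intervalIntegral.integral_const_mul, integral_pow]
  norm_num
  ring

theorem betaC_transpose_mul_chiE_mul_betaC (a b ξr ηr ξs ηs E μ ξ η : ℝ) :
    (betaC a b ξr ηr ξ η)ᵀ * chiE E μ * betaC a b ξs ηs ξ η =
      (E / ((1 + μ) * (1 - 2 * μ)) / 4) •
        !![(1 - μ) * (ξr * ξs / a ^ 2) * ((1 + ηr * η) * (1 + ηs * η)),
            μ * (ξr * ηs / (a * b)) * ((1 + ξs * ξ) * (1 + ηr * η));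
           μ * (ηr * ξs / (a * b)) * ((1 + ξr * ξ) * (1 + ηs * η)),
            (1 - μ) * (ηr * ηs / b ^ 2) * ((1 + ξr * ξ) * (1 + ξs * ξ))] := by
  ext i j
  fin_cases i <;> fin_cases j <;>
    simp [betaC, chiE, Matrix.mul_apply, Fin.sum_univ_three] <;> ring

theorem normal_stiffness_block_compatible_general
    (ξr ηr ξs ηs a b h E μ : ℝ)
    (ha : 0 < a) (hb : 0 < b) :
    (Matrix.of fun i j : Fin 2 =>
        (a * b * h / 4) *
          ∫ ξ in (-1:ℝ)..1, ∫ η in (-1:ℝ)..1,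
            ((betaC a b ξr ηr ξ η)ᵀ * chiE E μ * betaC a b ξs ηs ξ η) i j) =
      (E * h / (4 * (1 + μ) * (1 - 2 * μ))) •
        !![(1 - μ) * (b / a) * (ξr * ξs) * (1 + ηr * ηs / 3), μ * (ξr * ηs);
           μ * (ηr * ξs), (1 - μ) * (ηr * ηs / (b / a)) * (1 + ξr * ξs / 3)] := by
  simp_rw [betaC_transpose_mul_chiE_mul_betaC]
  ext i j
  -- The `(1, 1)` integrand does not depend on `η`; it must be integrated as a constant before
  -- `integral_const_mul` splits it.
  fin_cases i <;> fin_cases j <;>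
    simp only [of_apply, Matrix.smul_apply, smul_eq_mul, cons_val', cons_val_zero, cons_val_one,
      empty_val', cons_val_fin_one, Fin.zero_eta, Fin.mk_one, Fin.isValue,
      intervalIntegral_neg_one_one_const] <;>
    simp only [intervalIntegral.integral_const_mul, intervalIntegral.integral_mul_const,
      intervalIntegral_neg_one_one_one_add_mul,
      intervalIntegral_neg_one_one_one_add_mul_mul_one_add_mul] <;>
    field_simp <;> ring

theorem normal_stiffness_block_compatible
    (ξr ηr ξs ηs a b h E μ : ℝ)
    (hξr : ξr = -1 ∨ ξr = 1) (hηr : ηr = -1 ∨ ηr = 1)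
    (hξs : ξs = -1 ∨ ξs = 1) (hηs : ηs = -1 ∨ ηs = 1)
    (ha : 0 < a) (hb : 0 < b) (hh : 0 < h)
    (hμ : (1 + μ) * (1 - 2 * μ) ≠ 0) :
    (Matrix.of fun i j : Fin 2 =>
        (a * b * h / 4) *
          ∫ ξ in (-1:ℝ)..1, ∫ η in (-1:ℝ)..1,
            ((betaC a b ξr ηr ξ η)ᵀ * chiE E μ * betaC a b ξs ηs ξ η) i j) =
      (E * h / (4 * (1 + μ) * (1 - 2 * μ))) •
        !![(1 - μ) * (b / a) * (ξr * ξs) * (1 + ηr * ηs / 3), μ * (ξr * ηs);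
           μ * (ηr * ξs), (1 - μ) * (ηr * ηs / (b / a)) * (1 + ξr * ξs / 3)] :=
  normal_stiffness_block_compatible_general ξr ηr ξs ηs a b h E μ ha hb
end

section
/- For all node signs ξ_r, η_r, ξ_s, η_s ∈ {−1, 1}, all a, b, h > 0, and all E₁, E₂, μ₁, μ₂ ∈ ℝ with E₂ ≠ 0 and (1+μ₁)(1−μ₁−2n₁μ₂²) ≠ 0 where n₁ = E₁/E₂, setting γ = b/a and D = (1+μ₁)(1−μ₁−2n₁μ₂²), the 2×2 matrix (a·b·h/4) ∫_{−1}^{1} ∫_{−1}^{1} β_r(ξ,η)ᵀ χ_E^{ti} β_s(ξ,η) dξ dη equals (E₂·h/(4D)) · [[(n₁ − n₁²μ₂²)·γ·ξ_r ξ_s·(1 + η_r η_s/3), n₁μ₂(1+μ₁)·ξ_r η_s], [n₁μ₂(1+μ₁)·η_r ξ_s, (1−μ₁²)·(η_r η_s/γ)·(1 + ξ_r ξ_s/3)]]. -/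
open MeasureTheory Matrix

/-- Normal-deformation part of the plane-strain elasticity matrix of a transversely
isotropic material, with `n₁ = E₁/E₂`. -/
noncomputable def chiETI (E₁ E₂ μ₁ μ₂ : ℝ) : Matrix (Fin 3) (Fin 3) ℝ :=
  (E₂ / ((1 + μ₁) * (1 - μ₁ - 2 * (E₁ / E₂) * μ₂ ^ 2))) •
    !![(E₁ / E₂) * (1 - (E₁ / E₂) * μ₂ ^ 2), (E₁ / E₂) * μ₂ * (1 + μ₁), 0;
       (E₁ / E₂) * μ₂ * (1 + μ₁), 1 - μ₁ ^ 2, 0;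
       0, 0, 0]

lemma integ_poly (c0 c1 c2 : ℝ) :
    ∫ x in (-1:ℝ)..1, (c0 + c1*x + c2*x^2) = 2*c0 + 2/3*c2 := by
  have h : ∀ x ∈ Set.uIcc (-1:ℝ) 1,
      HasDerivAt (fun x : ℝ => c0*x + c1*x^2/2 + c2*x^3/3) (c0 + c1*x + c2*x^2) x := by
    intro x _
    have h1 : HasDerivAt (fun x : ℝ => c0*x + c1*x^2/2 + c2*x^3/3)
        (c0*1 + c1*(2*x^1)/2 + c2*(3*x^2)/3) x :=
      (((hasDerivAt_id x).const_mul c0).add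
        (((hasDerivAt_pow 2 x).const_mul c1).div_const 2)).add
        (((hasDerivAt_pow 3 x).const_mul c2).div_const 3)
    convert h1 using 1
    ring
  rw [intervalIntegral.integral_eq_sub_of_hasDerivAt h
    (Continuous.intervalIntegrable (by continuity) _ _)]
  ring

lemma integ2 (c00 c10 c01 c11 c20 c02 : ℝ) :
    (∫ ξ in (-1:ℝ)..1, ∫ η in (-1:ℝ)..1,
      (c00 + c10*ξ + c01*η + c11*(ξ*η) + c20*ξ^2 + c02*η^2)) =
      4*c00 + 4/3*c20 + 4/3*c02 := by
  have h : ∀ ξ : ℝ, (∫ η in (-1:ℝ)..1,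
      (c00 + c10*ξ + c01*η + c11*(ξ*η) + c20*ξ^2 + c02*η^2)) =
      (2*c00 + 2/3*c02) + (2*c10)*ξ + (2*c20)*ξ^2 := by
    intro ξ
    have := integ_poly (c00 + c10*ξ + c20*ξ^2) (c01 + c11*ξ) c02
    rw [intervalIntegral.integral_congr
      (g := fun η => (c00 + c10*ξ + c20*ξ^2) + (c01 + c11*ξ)*η + c02*η^2)
      (fun η _ => by ring), this]
    ring
  simp only [h]
  rw [integ_poly]
  ring

set_option maxHeartbeats 1000000 in
theorem normal_stiffness_block_transversely_isotropic
    (ξr ηr ξs ηs a b h E₁ E₂ μ₁ μ₂ : ℝ)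
    (hξr : ξr = -1 ∨ ξr = 1) (hηr : ηr = -1 ∨ ηr = 1)
    (hξs : ξs = -1 ∨ ξs = 1) (hηs : ηs = -1 ∨ ηs = 1)
    (ha : 0 < a) (hb : 0 < b) (hh : 0 < h)
    (hE₂ : E₂ ≠ 0)
    (hD : (1 + μ₁) * (1 - μ₁ - 2 * (E₁ / E₂) * μ₂ ^ 2) ≠ 0) :
    (Matrix.of fun i j : Fin 2 =>
        (a * b * h / 4) *
          ∫ ξ in (-1:ℝ)..1, ∫ η in (-1:ℝ)..1,
            ((betaC a b ξr ηr ξ η)ᵀ * chiETI E₁ E₂ μ₁ μ₂ * betaC a b ξs ηs ξ η) i j) =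
      (E₂ * h / (4 * ((1 + μ₁) * (1 - μ₁ - 2 * (E₁ / E₂) * μ₂ ^ 2)))) •
        !![((E₁ / E₂) - (E₁ / E₂) ^ 2 * μ₂ ^ 2) * (b / a) * (ξr * ξs) * (1 + ηr * ηs / 3),
             (E₁ / E₂) * μ₂ * (1 + μ₁) * (ξr * ηs);
           (E₁ / E₂) * μ₂ * (1 + μ₁) * (ηr * ξs),
             (1 - μ₁ ^ 2) * (ηr * ηs / (b / a)) * (1 + ξr * ξs / 3)] := by
  have ha' : a ≠ 0 := ha.ne'
  have hb' : b ≠ 0 := hb.ne'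
  ext i j
  fin_cases i <;> fin_cases j <;>
    simp only [Matrix.of_apply, Matrix.smul_apply, Matrix.cons_val', Matrix.cons_val_zero,
      Matrix.cons_val_one, Matrix.head_cons, Matrix.empty_val', Matrix.cons_val_fin_one,
      Matrix.head_fin_const, smul_eq_mul, Fin.zero_eta, Fin.mk_one]
  · -- (0,0)
    set K : ℝ := (E₂ / ((1 + μ₁) * (1 - μ₁ - 2 * (E₁ / E₂) * μ₂ ^ 2))) * ((E₁/E₂)*(1-(E₁/E₂)*μ₂^2)) * (ξr*ξs)/(4*a^2) with hK
    rw [intervalIntegral.integral_congr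
      (g := fun ξ => ∫ η in (-1:ℝ)..1,
        (K + 0*ξ + (K*(ηr+ηs))*η + 0*(ξ*η) + 0*ξ^2 + (K*(ηr*ηs))*η^2))
      (fun ξ _ => intervalIntegral.integral_congr (fun η _ => by
        simp only [betaC, chiETI, Matrix.mul_apply, Fin.sum_univ_succ, Fin.sum_univ_zero,
          Matrix.smul_apply, Matrix.transpose_apply, Matrix.of_apply, Matrix.cons_val',
          Matrix.cons_val_zero, Matrix.cons_val_one, Matrix.cons_val_succ, Matrix.head_cons, Matrix.empty_val',
          Matrix.cons_val_fin_one, Matrix.head_fin_const, smul_eq_mul, hK]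
        ring))]
    rw [integ2, hK]
    revert hD
    generalize (1 + μ₁) * (1 - μ₁ - 2 * (E₁ / E₂) * μ₂ ^ 2) = Dv
    intro hD
    field_simp
    ring
  · -- (0,1)
    set K : ℝ := (E₂ / ((1 + μ₁) * (1 - μ₁ - 2 * (E₁ / E₂) * μ₂ ^ 2))) * ((E₁/E₂)*μ₂*(1+μ₁)) * (ξr*ηs)/(4*a*b) with hK
    rw [intervalIntegral.integral_congr
      (g := fun ξ => ∫ η in (-1:ℝ)..1,
        (K + (K*ξs)*ξ + (K*ηr)*η + (K*(ηr*ξs))*(ξ*η) + 0*ξ^2 + 0*η^2))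
      (fun ξ _ => intervalIntegral.integral_congr (fun η _ => by
        simp only [betaC, chiETI, Matrix.mul_apply, Fin.sum_univ_succ, Fin.sum_univ_zero,
          Matrix.smul_apply, Matrix.transpose_apply, Matrix.of_apply, Matrix.cons_val',
          Matrix.cons_val_zero, Matrix.cons_val_one, Matrix.cons_val_succ, Matrix.head_cons, Matrix.empty_val',
          Matrix.cons_val_fin_one, Matrix.head_fin_const, smul_eq_mul, hK]
        ring))]
    rw [integ2, hK]
    revert hD
    generalize (1 + μ₁) * (1 - μ₁ - 2 * (E₁ / E₂) * μ₂ ^ 2) = Dv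
    intro hD
    field_simp
    ring
  · -- (1,0)
    set K : ℝ := (E₂ / ((1 + μ₁) * (1 - μ₁ - 2 * (E₁ / E₂) * μ₂ ^ 2))) * ((E₁/E₂)*μ₂*(1+μ₁)) * (ηr*ξs)/(4*a*b) with hK
    rw [intervalIntegral.integral_congr
      (g := fun ξ => ∫ η in (-1:ℝ)..1,
        (K + (K*ξr)*ξ + (K*ηs)*η + (K*(ξr*ηs))*(ξ*η) + 0*ξ^2 + 0*η^2))
      (fun ξ _ => intervalIntegral.integral_congr (fun η _ => by
        simp only [betaC, chiETI, Matrix.mul_apply, Fin.sum_univ_succ, Fin.sum_univ_zero,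
          Matrix.smul_apply, Matrix.transpose_apply, Matrix.of_apply, Matrix.cons_val',
          Matrix.cons_val_zero, Matrix.cons_val_one, Matrix.cons_val_succ, Matrix.head_cons, Matrix.empty_val',
          Matrix.cons_val_fin_one, Matrix.head_fin_const, smul_eq_mul, hK]
        ring))]
    rw [integ2, hK]
    revert hD
    generalize (1 + μ₁) * (1 - μ₁ - 2 * (E₁ / E₂) * μ₂ ^ 2) = Dv
    intro hD
    field_simp
    ring
  · -- (1,1)
    set K : ℝ := (E₂ / ((1 + μ₁) * (1 - μ₁ - 2 * (E₁ / E₂) * μ₂ ^ 2))) * (1-μ₁^2) * (ηr*ηs)/(4*b^2) with hK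
    rw [intervalIntegral.integral_congr
      (g := fun ξ => ∫ η in (-1:ℝ)..1,
        (K + (K*(ξr+ξs))*ξ + 0*η + 0*(ξ*η) + (K*(ξr*ξs))*ξ^2 + 0*η^2))
      (fun ξ _ => intervalIntegral.integral_congr (fun η _ => by
        simp only [betaC, chiETI, Matrix.mul_apply, Fin.sum_univ_succ, Fin.sum_univ_zero,
          Matrix.smul_apply, Matrix.transpose_apply, Matrix.of_apply, Matrix.cons_val',
          Matrix.cons_val_zero, Matrix.cons_val_one, Matrix.cons_val_succ, Matrix.head_cons, Matrix.empty_val',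
          Matrix.cons_val_fin_one, Matrix.head_fin_const, smul_eq_mul, hK]
        ring))]
    rw [integ2, hK]
    revert hD
    generalize (1 + μ₁) * (1 - μ₁ - 2 * (E₁ / E₂) * μ₂ ^ 2) = Dv
    intro hD
    field_simp
    ring
end

section
/- Let a_h > 0, b_h > 0, and let θ ∈ ℝ satisfy sin θ · cos θ ≠ 0. Then the denominator 2·a_h·b_h·(sin⁴θ + cos⁴θ) + (a_h + b_h)²·sin²θ·cos²θ is strictly positive, and the effective Poisson's ratio of the tetrachiral honeycomb, μ = −((a_h − b_h)²·sin²θ·cos²θ) / (2·a_h·b_h·(sin⁴θ + cos⁴θ) + (a_h + b_h)²·sin²θ·cos²θ), satisfies μ ≤ 0, with equality μ = 0 if and only if a_h = b_h. -/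
theorem tetrachiral_poisson_nonpositive
    (a_h b_h θ : ℝ) (ha : 0 < a_h) (hb : 0 < b_h)
    (hθ : Real.sin θ * Real.cos θ ≠ 0) :
    0 < 2 * a_h * b_h * (Real.sin θ ^ 4 + Real.cos θ ^ 4) +
        (a_h + b_h) ^ 2 * Real.sin θ ^ 2 * Real.cos θ ^ 2 ∧
      (-((a_h - b_h) ^ 2 * Real.sin θ ^ 2 * Real.cos θ ^ 2) /
          (2 * a_h * b_h * (Real.sin θ ^ 4 + Real.cos θ ^ 4) +
            (a_h + b_h) ^ 2 * Real.sin θ ^ 2 * Real.cos θ ^ 2) ≤ 0) ∧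
      (-((a_h - b_h) ^ 2 * Real.sin θ ^ 2 * Real.cos θ ^ 2) /
          (2 * a_h * b_h * (Real.sin θ ^ 4 + Real.cos θ ^ 4) +
            (a_h + b_h) ^ 2 * Real.sin θ ^ 2 * Real.cos θ ^ 2) = 0 ↔
        a_h = b_h) := by
  have hs : Real.sin θ ≠ 0 := fun h => hθ (by simp [h])
  have hc : Real.cos θ ≠ 0 := fun h => hθ (by simp [h])
  have hs2 : 0 < Real.sin θ ^ 2 := by positivity
  have hc2 : 0 < Real.cos θ ^ 2 := by positivity
  have hden : 0 < 2 * a_h * b_h * (Real.sin θ ^ 4 + Real.cos θ ^ 4) +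
      (a_h + b_h) ^ 2 * Real.sin θ ^ 2 * Real.cos θ ^ 2 := by
    have h4 : 0 < Real.sin θ ^ 4 + Real.cos θ ^ 4 := by positivity
    positivity
  refine ⟨hden, ?_, ?_⟩
  · apply div_nonpos_of_nonpos_of_nonneg
    · have : 0 ≤ (a_h - b_h) ^ 2 * Real.sin θ ^ 2 * Real.cos θ ^ 2 := by positivity
      linarith
    · linarith
  · rw [div_eq_zero_iff]
    constructor
    · rintro (h | h)
      · have key : (a_h - b_h) ^ 2 * (Real.sin θ ^ 2 * Real.cos θ ^ 2) = 0 := by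
          nlinarith
        have hsc : 0 < Real.sin θ ^ 2 * Real.cos θ ^ 2 := mul_pos hs2 hc2
        have : (a_h - b_h) ^ 2 = 0 := by
          rcases mul_eq_zero.1 key with h' | h'
          · exact h'
          · exact absurd h' hsc.ne'
        have := pow_eq_zero_iff (n := 2) (by norm_num) |>.1 this
        linarith
      · exact absurd h hden.ne'
    · intro h
      left; rw [h]; ring
end
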